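/- arXiv:2502.06278 — 3 statements merged into one kernel-verified Lean document; each statement's English description precedes it below -/
import Mathlib

section
/- Let κ ∈ ℕ with κ ≥ 1, let β > 0 and 0 < p_s < p_f be real numbers. Suppose b : ℝ → ℝ is continuous on [p_s, p_f), satisfies b(p_s) = κβ − p_s, and at every p ∈ [p_s, p_f) has derivative −(κ−1)·b(p)/p (within the interval). Suppose Ψ : ℝ → ℝ is continuous on [p_s, p_f], satisfies Ψ(p_s) = β/p_s, and at every p ∈ [p_s, p_f) has derivative −b(p)/p² (within the interval). Define x(p) := Ψ(p) − b(p)/p. Then for every p ∈ [p_s, p_f): b(p) = (κβ − p_s)·p_s^{κ−1}·p^{−(κ−1)}, x(p) = 1/κ − (κ−1)(κβ − p_s)·p_s^{κ−1}·p^{−κ}/κ, and for every p ∈ [p_s, p_f]: Ψ(p) = 1/κ + (κβ − p_s)·p_s^{κ−1}·p^{−κ}/κ. -/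
open Set Filter Topology

private lemma const_of_deriv_zero {s : Set ℝ} (hs : Convex ℝ s) {f : ℝ → ℝ}
    (hf : ∀ x ∈ s, HasDerivWithinAt f 0 s x) {x y : ℝ} (hx : x ∈ s) (hy : y ∈ s) :
    f x = f y := by
  have h := Convex.norm_image_sub_le_of_norm_hasDerivWithin_le (f' := fun _ => (0:ℝ))
    (C := 0) hf (fun z _ => by simp) hs hy hx
  have : ‖f x - f y‖ ≤ 0 := by simpa using h
  have := le_antisymm this (norm_nonneg _)
  rwa [norm_eq_zero, sub_eq_zero] at this

theorem adaptive_clinching_explicit_formula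
    (κ : ℕ) (hκ : 1 ≤ κ) (β p_s p_f : ℝ) (hβ : 0 < β)
    (hps : 0 < p_s) (hpsf : p_s < p_f)
    (b Ψ : ℝ → ℝ)
    (hb_cont : ContinuousOn b (Set.Ico p_s p_f))
    (hb_init : b p_s = κ * β - p_s)
    (hb_deriv : ∀ p ∈ Set.Ico p_s p_f,
      HasDerivWithinAt b (-((κ : ℝ) - 1) * b p / p) (Set.Ico p_s p_f) p)
    (hΨ_cont : ContinuousOn Ψ (Set.Icc p_s p_f))
    (hΨ_init : Ψ p_s = β / p_s)
    (hΨ_deriv : ∀ p ∈ Set.Ico p_s p_f,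
      HasDerivWithinAt Ψ (-(b p) / p ^ 2) (Set.Ico p_s p_f) p)
    (x : ℝ → ℝ) (hx : ∀ p, x p = Ψ p - b p / p) :
    (∀ p ∈ Set.Ico p_s p_f,
        b p = (κ * β - p_s) * p_s ^ (κ - 1) / p ^ (κ - 1)) ∧
    (∀ p ∈ Set.Ico p_s p_f,
        x p = 1 / κ - ((κ : ℝ) - 1) * (κ * β - p_s) * p_s ^ (κ - 1) / p ^ κ / κ) ∧
    (∀ p ∈ Set.Icc p_s p_f,
        Ψ p = 1 / κ + (κ * β - p_s) * p_s ^ (κ - 1) / p ^ κ / κ) := by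
  have hκ0 : (κ : ℝ) ≠ 0 := Nat.cast_ne_zero.mpr (by omega)
  have hcast : ((κ - 1 : ℕ) : ℝ) = (κ : ℝ) - 1 := by
    push_cast [Nat.cast_sub hκ]; ring
  have hmem_s : p_s ∈ Ico p_s p_f := ⟨le_refl _, hpsf⟩
  have hpos : ∀ p ∈ Ico p_s p_f, 0 < p := fun p hp => lt_of_lt_of_le hps hp.1
  set C : ℝ := (κ * β - p_s) * p_s ^ (κ - 1) with hC
  -- step 1 : b
  have hg : ∀ p ∈ Ico p_s p_f, b p * p ^ (κ - 1) = C := by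
    intro p hp
    have key : ∀ q ∈ Ico p_s p_f,
        HasDerivWithinAt (fun r => b r * r ^ (κ - 1)) 0 (Ico p_s p_f) q := by
      intro q hq
      have hq0 : q ≠ 0 := (hpos q hq).ne'
      have h1 := (hb_deriv q hq).mul ((hasDerivAt_pow (κ - 1) q).hasDerivWithinAt)
      refine h1.congr_deriv ?_
      symm
      rw [hcast]
      rcases Nat.lt_or_ge κ 2 with h2 | h2
      · interval_cases κ; simp
      · have : q ^ (κ - 1) = q ^ (κ - 1 - 1) * q := by
          rw [← pow_succ]; congr 1; omega
        rw [this]; field_simp [this]; ring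
    have := const_of_deriv_zero (convex_Ico _ _) key hp hmem_s
    rw [this, hb_init]
  have hbf : ∀ p ∈ Ico p_s p_f, b p = C / p ^ (κ - 1) := by
    intro p hp
    have hp0 : (p : ℝ) ^ (κ - 1) ≠ 0 := pow_ne_zero _ (hpos p hp).ne'
    field_simp [← hg p hp]
    exact hg p hp
  -- step 2 : Ψ on Ico
  set f : ℝ → ℝ := fun p => 1 / κ + C / p ^ κ / κ with hf
  have hfderiv : ∀ p ∈ Ico p_s p_f,
      HasDerivWithinAt f (-(b p) / p ^ 2) (Ico p_s p_f) p := by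
    intro p hp
    have hp0 : p ≠ 0 := (hpos p hp).ne'
    have hpk : (p : ℝ) ^ κ ≠ 0 := pow_ne_zero _ hp0
    have h1 : HasDerivAt (fun r : ℝ => 1 / (κ:ℝ) + C / r ^ κ / κ)
        (C / κ * (-(↑κ * p ^ (κ - 1)) / (p ^ κ) ^ 2)) p := by
      have := ((hasDerivAt_pow κ p).inv hpk).const_mul (C / κ)
      have h2 := this.const_add (1 / (κ:ℝ))
      have hfun : (fun r : ℝ => 1 / (κ:ℝ) + C / r ^ κ / κ) = fun r => 1 / (κ:ℝ) + C / κ * (r ^ κ)⁻¹ := by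
        funext r; ring
      rw [hfun]; exact h2
    have heq : C / κ * (-(↑κ * p ^ (κ - 1)) / (p ^ κ) ^ 2) = -(b p) / p ^ 2 := by
      rw [hbf p hp]
      have hpk1 : p ^ κ = p ^ (κ - 1) * p := by
        rw [← pow_succ]; congr 1; omega
      have hpk10 : (p : ℝ) ^ (κ - 1) ≠ 0 := pow_ne_zero _ hp0
      rw [hpk1]; field_simp
    rw [← heq]; exact h1.hasDerivWithinAt
  have hΨIco : ∀ p ∈ Ico p_s p_f, Ψ p = f p := by
    intro p hp
    have key : ∀ q ∈ Ico p_s p_f,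
        HasDerivWithinAt (fun r => Ψ r - f r) 0 (Ico p_s p_f) q := by
      intro q hq
      have := (hΨ_deriv q hq).sub (hfderiv q hq)
      exact this.congr_deriv (sub_self _)
    have h := const_of_deriv_zero (convex_Ico _ _) key hp hmem_s
    have hinit : Ψ p_s - f p_s = 0 := by
      rw [hΨ_init, hf]
      have hpk1 : p_s ^ κ = p_s ^ (κ - 1) * p_s := by
        rw [← pow_succ]; congr 1; omega
      have h1 : p_s ≠ 0 := hps.ne'
      have h2 : (p_s : ℝ) ^ (κ - 1) ≠ 0 := pow_ne_zero _ h1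
      simp only [hC]
      rw [hpk1]; field_simp [hpk1]; ring
    have : Ψ p - f p = 0 := by rw [h]; exact hinit
    linarith
  -- step 2b : Ψ at p_f
  have hΨIcc : ∀ p ∈ Icc p_s p_f, Ψ p = f p := by
    intro p hp
    rcases eq_or_lt_of_le hp.2 with rfl | hlt
    · have hne : (𝓝[Ico p_s p] p).NeBot := by
        rw [← mem_closure_iff_nhdsWithin_neBot, closure_Ico (ne_of_lt hpsf)]
        exact ⟨le_of_lt hpsf, le_refl _⟩
      have h1 : Filter.Tendsto Ψ (𝓝[Ico p_s p] p) (𝓝 (Ψ p)) :=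
        (hΨ_cont p ⟨le_of_lt hpsf, le_refl _⟩).mono Ico_subset_Icc_self
      have hfc : ContinuousAt f p := by
        have hp0 : (p:ℝ) ^ κ ≠ 0 := pow_ne_zero _ (lt_trans hps hpsf).ne'
        exact continuousAt_const.add
          ((continuousAt_const.div ((continuous_pow κ).continuousAt) hp0).div
            continuousAt_const hκ0)
      have h2 : Filter.Tendsto f (𝓝[Ico p_s p] p) (𝓝 (f p)) :=
        hfc.continuousWithinAt
      have h3 : Filter.Tendsto Ψ (𝓝[Ico p_s p] p) (𝓝 (f p)) := by
        apply h2.congr'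
        filter_upwards [self_mem_nhdsWithin] with q hq
        exact (hΨIco q hq).symm
      exact tendsto_nhds_unique h1 h3
    · exact hΨIco p ⟨hp.1, hlt⟩
  refine ⟨fun p hp => by rw [hbf p hp], ?_, fun p hp => hΨIcc p hp⟩
  -- step 3 : x
  intro p hp
  have hp0 : p ≠ 0 := (hpos p hp).ne'
  have hpk1 : p ^ κ = p ^ (κ - 1) * p := by
    rw [← pow_succ]; congr 1; omega
  have h2 : (p : ℝ) ^ (κ - 1) ≠ 0 := pow_ne_zero _ hp0
  rw [hx, hΨIcc p (Ico_subset_Icc_self hp), hbf p hp, hf]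
  simp only [hC]
  rw [hpk1]; field_simp [hpk1]; ring
end

section
/- Let κ ∈ ℕ with κ ≥ 2, let β > 0, and let p_s, v_θ be reals with (κ−1)β ≤ p_s ≤ v_θ ≤ κβ. Then for every p > 0: (κβ − v_θ)·v_θ^{κ−1}·p^{−(κ−1)} ≤ (κβ − p_s)·p_s^{κ−1}·p^{−(κ−1)}, and 1/κ + (κβ − v_θ)·v_θ^{κ−1}·p^{−κ}/κ ≤ 1/κ + (κβ − p_s)·p_s^{κ−1}·p^{−κ}/κ. -/
lemma budget_key (κ : ℕ) (hκ : 2 ≤ κ) (β p_s v_θ : ℝ) (hβ : 0 < β)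
    (h1 : ((κ : ℝ) - 1) * β ≤ p_s) (h2 : p_s ≤ v_θ) (h3 : v_θ ≤ κ * β) :
    ((κ : ℝ) * β - v_θ) * v_θ ^ (κ - 1) ≤ ((κ : ℝ) * β - p_s) * p_s ^ (κ - 1) := by
  have hκ1 : (1 : ℝ) ≤ (κ : ℝ) := by exact_mod_cast Nat.one_le_of_lt hκ
  set f : ℝ → ℝ := fun x => ((κ : ℝ) * β - x) * x ^ (κ - 1) with hf
  have hderiv : ∀ x : ℝ, HasDerivAt f
      ((-1) * x ^ (κ - 1) + ((κ : ℝ) * β - x) * ((κ - 1 : ℕ) * x ^ (κ - 1 - 1))) x := by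
    intro x
    exact ((hasDerivAt_id x).const_sub ((κ : ℝ) * β)).mul (hasDerivAt_pow (κ - 1) x)
  have hA : AntitoneOn f (Set.Icc (((κ : ℝ) - 1) * β) ((κ : ℝ) * β)) := by
    apply antitoneOn_of_deriv_nonpos (convex_Icc _ _)
    · exact (Continuous.mul (by continuity) (by continuity)).continuousOn
    · intro x hx
      exact (hderiv x).differentiableAt.differentiableWithinAt
    · intro x hx
      rw [interior_Icc] at hx
      have hx0 : 0 < x := lt_of_le_of_lt (by nlinarith) hx.1
      rw [(hderiv x).deriv]
      have hc : ((κ - 1 : ℕ) : ℝ) = (κ : ℝ) - 1 := by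
        push_cast [Nat.cast_sub (Nat.one_le_of_lt hκ)]; ring
      have hp1 : x ^ (κ - 1) = x * x ^ (κ - 1 - 1) := by
        rw [← pow_succ']
        congr 1
        omega
      rw [hc, hp1]
      have hpow : 0 ≤ x ^ (κ - 1 - 1) := le_of_lt (pow_pos hx0 _)
      have hκ0 : (0 : ℝ) < (κ : ℝ) := by positivity
      have hfac : ((κ : ℝ) - 1) * ((κ : ℝ) * β - x) - x ≤ 0 := by
        nlinarith [mul_lt_mul_of_pos_left hx.1 hκ0]
      calc -1 * (x * x ^ (κ - 1 - 1)) + ((κ : ℝ) * β - x) * (((κ : ℝ) - 1) * x ^ (κ - 1 - 1))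
          = x ^ (κ - 1 - 1) * (((κ : ℝ) - 1) * ((κ : ℝ) * β - x) - x) := by ring
        _ ≤ 0 := mul_nonpos_of_nonneg_of_nonpos hpow hfac
  have := hA (Set.mem_Icc.mpr ⟨h1, le_trans h2 h3⟩)
    (Set.mem_Icc.mpr ⟨le_trans h1 h2, h3⟩) h2
  simpa [hf] using this

theorem budget_wishful_comparison
    (κ : ℕ) (hκ : 2 ≤ κ) (β p_s v_θ : ℝ) (hβ : 0 < β)
    (h1 : ((κ : ℝ) - 1) * β ≤ p_s) (h2 : p_s ≤ v_θ) (h3 : v_θ ≤ κ * β) :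
    ∀ p : ℝ, 0 < p →
      (κ * β - v_θ) * v_θ ^ (κ - 1) / p ^ (κ - 1)
          ≤ (κ * β - p_s) * p_s ^ (κ - 1) / p ^ (κ - 1) ∧
      1 / κ + (κ * β - v_θ) * v_θ ^ (κ - 1) / p ^ κ / κ
          ≤ 1 / κ + (κ * β - p_s) * p_s ^ (κ - 1) / p ^ κ / κ := by
  intro p hp
  have key := budget_key κ hκ β p_s v_θ hβ h1 h2 h3
  have hpk : (0 : ℝ) < p ^ (κ - 1) := pow_pos hp _
  have hpκ : (0 : ℝ) < p ^ κ := pow_pos hp _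
  have hκ0 : (0 : ℝ) < (κ : ℝ) := by positivity
  constructor
  · exact div_le_div_of_nonneg_right key hpk.le
  · have : (κ * β - v_θ) * v_θ ^ (κ - 1) / p ^ κ ≤ (κ * β - p_s) * p_s ^ (κ - 1) / p ^ κ :=
      div_le_div_of_nonneg_right key hpκ.le
    have := div_le_div_of_nonneg_right this hκ0.le
    linarith
end

section
/- Let κ ∈ ℕ with κ ≥ 1, let γ, v, p', α be reals with 0 < γ ≤ v ≤ p' and α > 0. Then (v/p')^{κ−1} · (κ − v(κ−1)/γ) · α ≤ (γ/p')^{κ−1} · α. -/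
lemma key_poly (n : ℕ) (γ v : ℝ) (hγ : 0 < γ) (hγv : γ ≤ v) :
    v ^ n * ((n + 1 : ℝ) * γ - n * v) ≤ γ ^ (n + 1) := by
  induction n with
  | zero => simp
  | succ n ih =>
    have hv : 0 < v := hγ.trans_le hγv
    have hvn : (0:ℝ) ≤ v ^ n := (pow_pos hv n).le
    have step : v ^ (n+1) * ((n + 2 : ℝ) * γ - (n+1) * v)
        ≤ γ * (v ^ n * ((n + 1 : ℝ) * γ - n * v)) := by
      have : v ^ (n+1) * ((n + 2 : ℝ) * γ - (n+1) * v)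
          - γ * (v ^ n * ((n + 1 : ℝ) * γ - n * v))
          = -((n+1) * v ^ n * (v - γ)^2) := by ring
      nlinarith [mul_nonneg (mul_nonneg (by positivity : (0:ℝ) ≤ (n:ℝ)+1) hvn) (sq_nonneg (v - γ))]
    calc v ^ (n+1) * ((↑(n+1) + 1 : ℝ) * γ - ↑(n+1) * v)
        = v ^ (n+1) * ((n + 2 : ℝ) * γ - (n+1) * v) := by push_cast; ring
      _ ≤ γ * (v ^ n * ((n + 1 : ℝ) * γ - n * v)) := step
      _ ≤ γ * γ ^ (n+1) := by
          exact mul_le_mul_of_nonneg_left ih hγ.le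
      _ = γ ^ (n+1+1) := by ring

lemma key_ineq (n : ℕ) (γ v : ℝ) (hγ : 0 < γ) (hγv : γ ≤ v) :
    v ^ n * ((n + 1 : ℝ) - v * n / γ) ≤ γ ^ n := by
  have h := key_poly n γ v hγ hγv
  have h2 : v ^ n * ((n + 1 : ℝ) - v * n / γ) * γ ≤ γ ^ n * γ := by
    have : v ^ n * ((n + 1 : ℝ) - v * n / γ) * γ = v ^ n * ((n + 1 : ℝ) * γ - n * v) := by
      field_simp
    rw [this, ← pow_succ]
    exact h
  exact le_of_mul_le_mul_right h2 hγ

theorem online_budget_comparison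
    (κ : ℕ) (hκ : 1 ≤ κ) (γ v p' α : ℝ)
    (hγ : 0 < γ) (hγv : γ ≤ v) (hvp : v ≤ p') (hα : 0 < α) :
    (v / p') ^ (κ - 1) * ((κ : ℝ) - v * ((κ : ℝ) - 1) / γ) * α
      ≤ (γ / p') ^ (κ - 1) * α := by
  have hp : 0 < p' := lt_of_lt_of_le (hγ.trans_le hγv) hvp
  obtain ⟨n, rfl⟩ : ∃ n, κ = n + 1 := ⟨κ - 1, (Nat.succ_pred_eq_of_pos hκ).symm⟩
  simp only [Nat.add_sub_cancel]
  have hκr : ((n + 1 : ℕ) : ℝ) = (n : ℝ) + 1 := by push_cast; ring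
  rw [hκr]
  have key := key_ineq n γ v hγ hγv
  have hpn : (0:ℝ) < p' ^ n := pow_pos hp n
  have : (v / p') ^ n * ((n : ℝ) + 1 - v * ((n : ℝ) + 1 - 1) / γ)
      ≤ (γ / p') ^ n := by
    calc (v / p') ^ n * ((n : ℝ) + 1 - v * ((n : ℝ) + 1 - 1) / γ)
        = v ^ n * ((n + 1 : ℝ) - v * n / γ) * (1 / p' ^ n) := by
          rw [div_pow]; ring
      _ ≤ γ ^ n * (1 / p' ^ n) :=
          mul_le_mul_of_nonneg_right key (by positivity)
      _ = (γ / p') ^ n := by rw [div_pow]; ring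
  exact mul_le_mul_of_nonneg_right this hα.le
end
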